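/- Let L/K be a field extension and M ∈ M_n(K) a cyclic matrix with minimal polynomial f. If C ⊆ L^n is an M-cyclic code with generator polynomial g, and f = gh, then the dual code C^⊥ = {c' ∈ L^n : ⟨c',c⟩ = 0 for all c ∈ C} is stable under c' ↦ c'M, and is the Mᵗ-cyclic code with generator polynomial h. -/

import Mathlib

open Polynomial Matrix

/-!
Over a field, a cyclic vector `u` of `A` makes `p ↦ p(A) u` surjective and its first `n` iterates
linearly independent, so `minpoly A = charpoly A`; hence the minimal polynomial does not change
under extension of scalars. Since `p(Aᵀ) = p(A)ᵀ`, we have `⟨Q(Aᵀ) w, P(A) u⟩ = ⟨w, (QP)(A) u⟩`.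
So the `Aᵀ`-code of `h` is orthogonal to the `A`-code of `g` because `(gh)(A) = 0`; conversely,
if `Q(Aᵀ) w` is orthogonal to the `A`-code of `g`, then `(Qg)(A) u` is orthogonal to every
`P(Aᵀ) w`, i.e. to everything, so `(Qg)(A) = 0`, `gh ∣ Qg` and `h ∣ Q`.
-/

namespace Matrix

variable {R : Type*} {n : ℕ}

theorem aeval_transpose {m : Type*} [Fintype m] [DecidableEq m] [CommSemiring R]
    (A : Matrix m m R) (p : R[X]) : aeval Aᵀ p = (aeval A p)ᵀ :=
  MulOpposite.op_injective <| by
    simpa [aeval_op_apply] using aeval_algHom_apply (transposeAlgEquiv m R R).toAlgHom A p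

theorem aeval_transpose_mulVec_dotProduct {m : Type*} [Fintype m] [DecidableEq m]
    [CommSemiring R] (A : Matrix m m R) (p q : R[X]) (x y : m → R) :
    (aeval Aᵀ p *ᵥ x) ⬝ᵥ (aeval A q *ᵥ y) = x ⬝ᵥ (aeval A (p * q) *ᵥ y) := by
  rw [aeval_transpose, mulVec_transpose, ← dotProduct_mulVec, mulVec_mulVec, map_mul]

def IsCyclicVector [Semiring R] (A : Matrix (Fin n) (Fin n) R) (u : Fin n → R) : Prop :=
  Submodule.span R (Set.range fun i : Fin n => (A ^ (i : ℕ)) *ᵥ u) = ⊤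

def cyclicCode [CommSemiring R] (A : Matrix (Fin n) (Fin n) R) (u : Fin n → R) (g : R[X]) :
    Set (Fin n → R) :=
  {c | ∃ P : R[X], c = aeval A (g * P) *ᵥ u}

def dualCode {ι : Type*} [Fintype ι] [Semiring R] (S : Set (ι → R)) : Set (ι → R) :=
  {c' | ∀ c ∈ S, c' ⬝ᵥ c = 0}

section CommSemiring

variable [CommSemiring R] {A : Matrix (Fin n) (Fin n) R} {u w : Fin n → R}

theorem IsCyclicVector.exists_aeval_mulVec_eq (hu : A.IsCyclicVector u) (c : Fin n → R) :
    ∃ p : R[X], aeval A p *ᵥ u = c := by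
  have hle : Submodule.span R (Set.range fun i : Fin n => (A ^ (i : ℕ)) *ᵥ u) ≤
      LinearMap.range ((mulVecBilin R R).flip u ∘ₗ (aeval A).toLinearMap) := by
    rw [Submodule.span_le]
    rintro _ ⟨i, rfl⟩
    exact ⟨X ^ (i : ℕ), by simp⟩
  exact hle (hu ▸ Submodule.mem_top : c ∈ _)

theorem IsCyclicVector.aeval_eq_zero_of_mulVec_eq_zero (hu : A.IsCyclicVector u) {p : R[X]}
    (hp : aeval A p *ᵥ u = 0) : aeval A p = 0 := by
  refine mulVec_injective (funext fun c => ?_)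
  obtain ⟨q, rfl⟩ := hu.exists_aeval_mulVec_eq c
  rw [mulVec_mulVec, ← map_mul, mul_comm, map_mul, ← mulVec_mulVec, hp, mulVec_zero, zero_mulVec]

theorem vecMul_mem_dualCode_cyclicCode {g : R[X]} {c' : Fin n → R}
    (hc' : c' ∈ dualCode (cyclicCode A u g)) : c' ᵥ* A ∈ dualCode (cyclicCode A u g) := by
  rintro _ ⟨P, rfl⟩
  rw [← dotProduct_mulVec, mulVec_mulVec]
  refine hc' _ ⟨X * P, ?_⟩
  rw [mul_left_comm, map_mul (aeval A) X, aeval_X]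

theorem cyclicCode_transpose_subset_dualCode {g h : R[X]} (hgh : aeval A (g * h) = 0) :
    cyclicCode Aᵀ w h ⊆ dualCode (cyclicCode A u g) := by
  rintro _ ⟨P, rfl⟩ _ ⟨Q, rfl⟩
  rw [aeval_transpose_mulVec_dotProduct, show h * P * (g * Q) = g * h * (P * Q) by ring,
    map_mul, hgh, zero_mul, zero_mulVec, dotProduct_zero]

end CommSemiring

section Field

variable {K : Type*} [Field K] {A : Matrix (Fin n) (Fin n) K} {u w : Fin n → K}

theorem IsCyclicVector.linearIndependent (hu : A.IsCyclicVector u) :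
    LinearIndependent K fun i : Fin n => (A ^ (i : ℕ)) *ᵥ u :=
  linearIndependent_of_top_le_span_of_card_eq_finrank hu.ge (by simp)

theorem IsCyclicVector.map {L : Type*} [Field L] (hu : A.IsCyclicVector u) (f : K →+* L) :
    (A.map f).IsCyclicVector (f ∘ u) := by
  let B : Matrix (Fin n) (Fin n) K := .of fun i : Fin n => (A ^ (i : ℕ)) *ᵥ u
  have hB : IsUnit (B.map f) :=
    (linearIndependent_rows_iff_isUnit.mp hu.linearIndependent).map f.mapMatrix
  have hrows : (B.map f).row = fun i : Fin n => (A.map f ^ (i : ℕ)) *ᵥ (f ∘ u) := by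
    ext i j
    simp [B, ← Matrix.map_pow, RingHom.map_mulVec]
  rw [IsCyclicVector, ← hrows]
  exact (linearIndependent_rows_iff_isUnit.mpr hB).span_eq_top_of_card_eq_finrank' (by simp)

theorem IsCyclicVector.eq_zero_of_aeval_mulVec_eq_zero (hu : A.IsCyclicVector u) {p : K[X]}
    (hdeg : p.natDegree < n) (hp : aeval A p *ᵥ u = 0) : p = 0 := by
  have hsum : ∑ i : Fin n, p.coeff i • (A ^ (i : ℕ)) *ᵥ u = 0 := by
    rw [← hp, aeval_eq_sum_range' hdeg, sum_mulVec, ← Fin.sum_univ_eq_sum_range]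
    simp [smul_mulVec]
  have hcoeff := Fintype.linearIndependent_iff.mp hu.linearIndependent _ hsum
  by_contra hne
  exact leadingCoeff_ne_zero.mpr hne (hcoeff ⟨p.natDegree, hdeg⟩)

theorem IsCyclicVector.minpoly_eq_charpoly (hu : A.IsCyclicVector u) :
    minpoly K A = A.charpoly := by
  refine (eq_of_monic_of_dvd_of_natDegree_le (minpoly.monic (.of_finite K A))
    A.charpoly_monic (minpoly_dvd_charpoly A) ?_).symm
  rw [charpoly_natDegree_eq_dim, Fintype.card_fin]
  by_contra! hlt
  exact minpoly.ne_zero (.of_finite K A)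
    (hu.eq_zero_of_aeval_mulVec_eq_zero hlt (by rw [minpoly.aeval, zero_mulVec]))

theorem dualCode_cyclicCode_subset (hu : A.IsCyclicVector u) (hw : Aᵀ.IsCyclicVector w)
    {g h : K[X]} (hgh : minpoly K A = g * h) (hg : g ≠ 0) :
    dualCode (cyclicCode A u g) ⊆ cyclicCode Aᵀ w h := by
  intro c' hc'
  obtain ⟨Q, rfl⟩ := hw.exists_aeval_mulVec_eq c'
  have hQg : aeval A (Q * g) *ᵥ u = 0 := by
    refine dotProduct_eq_zero _ fun x => ?_
    obtain ⟨P, rfl⟩ := hw.exists_aeval_mulVec_eq x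
    rw [dotProduct_comm, aeval_transpose_mulVec_dotProduct,
      show P * (Q * g) = Q * (g * P) by ring, ← aeval_transpose_mulVec_dotProduct]
    exact hc' _ ⟨P, rfl⟩
  have hdvd : g * h ∣ g * Q := by
    rw [← hgh, mul_comm]
    exact minpoly.dvd K A (hu.aeval_eq_zero_of_mulVec_eq_zero hQg)
  obtain ⟨t, rfl⟩ := (mul_dvd_mul_iff_left hg).mp hdvd
  exact ⟨t, rfl⟩

theorem dualCode_cyclicCode (hu : A.IsCyclicVector u) (hw : Aᵀ.IsCyclicVector w)
    {g h : K[X]} (hgh : minpoly K A = g * h) (hg : g ≠ 0) :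
    dualCode (cyclicCode A u g) = cyclicCode Aᵀ w h :=
  (dualCode_cyclicCode_subset hu hw hgh hg).antisymm
    (cyclicCode_transpose_subset_dualCode (by rw [← hgh, minpoly.aeval]))

end Field

end Matrix

/-- If `C` is the `M`-cyclic code with generator polynomial `g` and `f = g h`, then
the dual code `C^⊥` is stable under `c' ↦ c'M` and is the `Mᵗ`-cyclic code with
generator polynomial `h`. -/
theorem stmt12 {K L : Type*} [Field K] [Field L] [Algebra K L] {n : ℕ}
    (M : Matrix (Fin n) (Fin n) K) (v : Fin n → K)
    (hv : Submodule.span K (Set.range fun i : Fin n => (M ^ (i : ℕ)).mulVec v) = ⊤)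
    (w : Fin n → K)
    (hw : Submodule.span K (Set.range fun i : Fin n => (Mᵀ ^ (i : ℕ)).mulVec w) = ⊤)
    (g h : Polynomial L) (hgmonic : g.Monic)
    (hf : (minpoly K M).map (algebraMap K L) = g * h)
    (S : Set (Fin n → L))
    (hS : S = {c : Fin n → L | ∃ P : Polynomial L,
      c = (Polynomial.aeval (M.map (algebraMap K L)) (g * P)).mulVec
        (fun j => algebraMap K L (v j))}) :
    (∀ c' : Fin n → L, (∀ c ∈ S, c' ⬝ᵥ c = 0) →
      ∀ c ∈ S, (Matrix.vecMul c' (M.map (algebraMap K L))) ⬝ᵥ c = 0) ∧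
    {c' : Fin n → L | ∀ c ∈ S, c' ⬝ᵥ c = 0}
      = {c : Fin n → L | ∃ P : Polynomial L,
          c = (Polynomial.aeval ((M.map (algebraMap K L))ᵀ) (h * P)).mulVec
            (fun j => algebraMap K L (w j))} := by
  have hvK : M.IsCyclicVector v := hv
  have hvL : (M.map (algebraMap K L)).IsCyclicVector (algebraMap K L ∘ v) := hvK.map _
  have hwK : Mᵀ.IsCyclicVector w := hw
  have hwL : (M.map (algebraMap K L))ᵀ.IsCyclicVector (algebraMap K L ∘ w) := by
    simpa only [transpose_map] using hwK.map (algebraMap K L)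
  have hminpoly : minpoly L (M.map (algebraMap K L)) = g * h := by
    rw [hvL.minpoly_eq_charpoly, charpoly_map, ← hvK.minpoly_eq_charpoly, hf]
  subst hS
  exact ⟨fun _ => vecMul_mem_dualCode_cyclicCode,
    dualCode_cyclicCode hvL hwL hminpoly hgmonic.ne_zero⟩
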